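/- Suppose there exists a constant C > 0 such that for every prime p ≡ 1 (mod 4) and every integer K with 2 ≤ K ≤ p + 1, the Paley ETF Φ_p has the (K, δ)-RIP with δ = C·√(K/p)·(log K)·(log p). Then for every α > 0 there exists p₀ such that for every prime p ≥ p₀ with p ≡ 1 (mod 4), every clique of the Paley graph G_p has size at most p^α. -/

import Mathlib

open scoped Classical
open Finset

noncomputable section

/-- The quadratic character `χ` of `F_p`: `χ 0 = 0`, `χ x = 1` if `x` is a nonzero square,
and `χ x = -1` otherwise. -/
def quadChar (p : ℕ) (x : ZMod p) : ℤ :=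
  if x = 0 then 0 else if IsSquare x then 1 else -1

/-- The canonical additive character `ψ` of `F_p`, `ψ x = exp(2πi·x/p)`. -/
def addChar' (p : ℕ) (x : ZMod p) : ℂ :=
  Complex.exp (2 * Real.pi * Complex.I * (x.val : ℂ) / (p : ℂ))

/-- The set of quadratic residues mod `p` (nonzero squares), as a type. -/
abbrev QRes (p : ℕ) : Type := {b : ZMod p // b ≠ 0 ∧ IsSquare b}

/-- The Paley ETF: rows indexed by `{0} ∪ Q_p` (with `none` the `0`-row),
columns indexed by `F_p ∪ {∞}` (with `none` the `∞`-column). -/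
def PaleyETF (p : ℕ) : Matrix (Option (QRes p)) (Option (ZMod p)) ℂ :=
  fun r c =>
    match r, c with
    | none, none => 1
    | none, some _ => ((1 / Real.sqrt p : ℝ) : ℂ)
    | some _, none => 0
    | some b, some a => ((Real.sqrt (2 / p) : ℝ) : ℂ) * addChar' p (b.1 * a)

/-- `(K, δ)`-restricted isometry property for a complex matrix: for every vector `x`
with at most `K` nonzero entries, `(1-δ)‖x‖² ≤ ‖Φx‖² ≤ (1+δ)‖x‖²`. -/
def HasRIP {M N : Type*} [Fintype M] [Fintype N] (Φ : Matrix M N ℂ) (K δ : ℝ) : Prop :=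
  ∀ x : N → ℂ, ((Finset.univ.filter fun n => x n ≠ 0).card : ℝ) ≤ K →
    (1 - δ) * ∑ n, ‖x n‖ ^ 2 ≤ ∑ m, ‖∑ n, Φ m n * x n‖ ^ 2 ∧
      ∑ m, ‖∑ n, Φ m n * x n‖ ^ 2 ≤ (1 + δ) * ∑ n, ‖x n‖ ^ 2

/-- The Paley graph extractor: `Ext_p(x,y) = 1` if `x = y`, and `(χ(x−y)+1)/2` otherwise
(which is `1` iff `x − y` is a nonzero square, `0` otherwise). -/
def paleyExt (p : ℕ) (x y : ZMod p) : ℕ :=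
  if x = y then 1 else if IsSquare (x - y) then 1 else 0

/-- Indicator vector of `U ⊆ F_p` with respect to the column indexing of the Paley ETF
(entry `0` in the `∞` coordinate). -/
def indic (p : ℕ) (U : Finset (ZMod p)) : Option (ZMod p) → ℂ :=
  fun c => match c with
  | none => 0
  | some a => if a ∈ U then 1 else 0

/-! For a clique `S` of `G_p` with `K = |S| ≥ 2`, the indicator of `S` is a `K`-sparse vector.
The columns of `Φ_p` indexed by `F_p` are unit vectors, and two of them, `a ≠ a'`, have inner
product `g / p` whenever `a' - a` is a nonzero square, `g` being the quadratic Gauss sum, of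
absolute value `√p`. Hence `‖Φ_p 1_S‖² - K = K (K - 1) g / p`, and the RIP forces
`K - 1 ≤ δ √p = C √K log K log p`. Since `log K ≤ 4 K^{1/4}`, this gives `K ≤ (8 C log p)⁴`,
which is at most `p^α` once `p` is large. -/

open Matrix ComplexConjugate Real Filter

section RestrictedIsometry

variable {M N : Type*} [Fintype M]

lemma sum_norm_mulVec_sq_eq_sum_gram [Fintype N] (Φ : Matrix M N ℂ) (x : N → ℂ) :
    ((∑ m, ‖∑ n, Φ m n * x n‖ ^ 2 : ℝ) : ℂ) =
      ∑ n, ∑ n', star (x n) * x n' * (Φᴴ * Φ) n n' := by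
  simp_rw [mul_apply, conjTranspose_apply, Finset.mul_sum]
  push_cast
  simp_rw [← Complex.conj_mul', map_sum, map_mul, Finset.sum_mul_sum]
  rw [Finset.sum_comm]
  refine Finset.sum_congr rfl fun n _ => ?_
  rw [Finset.sum_comm]
  refine Finset.sum_congr rfl fun n' _ => Finset.sum_congr rfl fun m _ => ?_
  simp only [RCLike.star_def]
  ring

lemma sum_norm_mulVec_indicator_sq [Fintype N] (Φ : Matrix M N ℂ) (S : Finset N) :
    ((∑ m, ‖∑ n, Φ m n * (if n ∈ S then 1 else 0)‖ ^ 2 : ℝ) : ℂ) =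
      ∑ n ∈ S, ∑ n' ∈ S, (Φᴴ * Φ) n n' := by
  rw [sum_norm_mulVec_sq_eq_sum_gram]
  simp [ite_mul, Finset.sum_ite_mem]

lemma sum_gram_eq_of_equiangular {Φ : Matrix M N ℂ} {S : Finset N} {μ : ℂ}
    (hdiag : ∀ n ∈ S, (Φᴴ * Φ) n n = 1)
    (hoff : ∀ n ∈ S, ∀ n' ∈ S, n ≠ n' → (Φᴴ * Φ) n n' = μ) :
    ∑ n ∈ S, ∑ n' ∈ S, (Φᴴ * Φ) n n' = S.card + S.card * (S.card - 1) * μ := by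
  have hrow : ∀ n ∈ S, ∑ n' ∈ S, (Φᴴ * Φ) n n' = S.card * μ + (1 - μ) := by
    intro n hn
    have hsplit : ∀ n' ∈ S, (Φᴴ * Φ) n n' = μ + if n = n' then 1 - μ else 0 := by
      intro n' hn'
      by_cases h : n = n'
      · subst h; simp [hdiag n hn]
      · simp [hoff n hn n' hn' h, h]
    rw [Finset.sum_congr rfl hsplit, Finset.sum_add_distrib, Finset.sum_ite_eq S n, if_pos hn,
      Finset.sum_const, nsmul_eq_mul]
  rw [Finset.sum_congr rfl hrow, Finset.sum_const, nsmul_eq_mul]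
  ring

lemma HasRIP.card_sub_one_mul_norm_le [Fintype N] {Φ : Matrix M N ℂ} {S : Finset N} {δ : ℝ}
    {μ : ℂ} (hΦ : HasRIP Φ S.card δ) (hS : S.Nonempty)
    (hdiag : ∀ n ∈ S, (Φᴴ * Φ) n n = 1)
    (hoff : ∀ n ∈ S, ∀ n' ∈ S, n ≠ n' → (Φᴴ * Φ) n n' = μ) :
    ((S.card : ℝ) - 1) * ‖μ‖ ≤ δ := by
  set K : ℝ := (S.card : ℝ)
  have hK : 1 ≤ K := by simpa [K] using hS.card_pos
  obtain ⟨hlow, hup⟩ := hΦ (fun n => if n ∈ S then 1 else 0) (by simp [K])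
  have hx : ∑ n, ‖(if n ∈ S then 1 else 0 : ℂ)‖ ^ 2 = K := by simp [K, apply_ite]
  rw [hx] at hlow hup
  set T := ∑ m, ‖∑ n, Φ m n * (if n ∈ S then 1 else 0)‖ ^ 2
  have hT : ((T - K : ℝ) : ℂ) = ((K * (K - 1) : ℝ) : ℂ) * μ := by
    push_cast
    rw [sum_norm_mulVec_indicator_sq, sum_gram_eq_of_equiangular hdiag hoff]
    simp only [K, Complex.ofReal_natCast]
    ring
  have hdev : K * ((K - 1) * ‖μ‖) = |T - K| := by
    rw [← Real.norm_eq_abs, ← Complex.norm_real, hT, norm_mul, Complex.norm_real,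
      Real.norm_of_nonneg (by nlinarith)]
    ring
  refine le_of_mul_le_mul_left ?_ (by linarith : 0 < K)
  rw [hdev, mul_comm K δ]
  exact abs_sub_le_iff.mpr ⟨by linarith, by linarith⟩

end RestrictedIsometry

lemma addChar'_eq_stdAddChar {p : ℕ} [NeZero p] (x : ZMod p) :
    addChar' p x = ZMod.stdAddChar x := by
  rw [addChar', ZMod.stdAddChar_apply, ZMod.toCircle_apply]

lemma conj_stdAddChar {N : ℕ} [NeZero N] (x : ZMod N) :
    conj (ZMod.stdAddChar x) = ZMod.stdAddChar (-x) := by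
  rw [AddChar.map_neg_eq_inv, ZMod.stdAddChar_apply, ← Circle.coe_inv, Circle.coe_inv_eq_conj]

lemma stdAddChar_ne_one {N : ℕ} [NeZero N] [Fact (1 < N)] : ZMod.stdAddChar (N := N) ≠ 1 := by
  intro h
  have := ZMod.injective_stdAddChar (N := N) (by rw [h, AddChar.one_apply, AddChar.one_apply] :
    ZMod.stdAddChar (1 : ZMod N) = ZMod.stdAddChar 0)
  exact one_ne_zero this

def complexQuadraticChar (p : ℕ) [Fact p.Prime] : MulChar (ZMod p) ℂ :=
  (quadraticChar (ZMod p)).ringHomComp (Int.castRingHom ℂ)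

section Paley

variable {p : ℕ} [Fact p.Prime]

local notation "χ" => complexQuadraticChar p
local notation "ψ" => ZMod.stdAddChar (N := p)

lemma complexQuadraticChar_apply (a : ZMod p) : χ a = quadChar p a := by
  simp only [complexQuadraticChar, MulChar.ringHomComp_apply, quadraticChar_apply,
    quadraticCharFun, quadChar]
  split_ifs <;> simp

lemma PaleyETF_gram_apply_some (a a' : ZMod p) :
    ((PaleyETF p)ᴴ * PaleyETF p) (some a) (some a') =
      (1 + 2 * ∑ b : QRes p, ψ (b.1 * (a' - a))) / p := by
  simp only [mul_apply, conjTranspose_apply, Fintype.sum_option, PaleyETF, RCLike.star_def,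
    map_mul, addChar'_eq_stdAddChar, conj_stdAddChar, Complex.conj_ofReal]
  have hsqrt (x : ℝ) (hx : 0 ≤ x) : ((√x : ℝ) : ℂ) * ((√x : ℝ) : ℂ) = x := by
    rw [← Complex.ofReal_mul, Real.mul_self_sqrt hx]
  have hchar (b : ZMod p) : ψ (-(b * a)) * ψ (b * a') = ψ (b * (a' - a)) := by
    rw [← AddChar.map_add_eq_mul]
    congr 1
    ring
  simp_rw [mul_mul_mul_comm _ (ψ _), hsqrt _ (by positivity : (0 : ℝ) ≤ 2 / p), hchar,
    one_div, ← Real.sqrt_inv, hsqrt _ (by positivity : (0 : ℝ) ≤ (p : ℝ)⁻¹), ← Finset.mul_sum]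
  push_cast
  ring

lemma sum_quadraticChar_add_one_mul (f : ZMod p → ℂ) :
    ∑ a, (χ a + 1) * f a = 2 * ∑ b : QRes p, f b.1 + f 0 := by
  have hpt (a : ZMod p) : (χ a + 1) * f a =
      (if a ≠ 0 ∧ IsSquare a then 2 * f a else 0) + if a = 0 then f 0 else 0 := by
    rw [complexQuadraticChar_apply, quadChar]
    by_cases h0 : a = 0
    · simp [h0]
    · by_cases hsq : IsSquare a
      · simp only [h0, hsq, if_true, if_false, ne_eq, not_false_eq_true, and_self]
        push_cast
        ring
      · simp [h0, hsq]
  rw [Finset.sum_congr rfl fun a _ => hpt a, Finset.sum_add_distrib, ← Finset.sum_filter,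
    ← Finset.mul_sum, Finset.sum_ite_eq',
    Finset.sum_subtype (p := fun a : ZMod p => a ≠ 0 ∧ IsSquare a) (F := inferInstance) _
      (fun a => by simp) f]
  simp

lemma two_mul_card_qres_add_one (hp2 : p ≠ 2) : 2 * (Fintype.card (QRes p) : ℂ) + 1 = p := by
  have hχ : ∑ a, χ a = 0 := by
    simp only [complexQuadraticChar, MulChar.ringHomComp_apply, ← map_sum,
      quadraticChar_sum_zero (by rwa [ZMod.ringChar_zmod_n] : ringChar (ZMod p) ≠ 2), map_zero]
  simpa [Finset.sum_add_distrib, hχ] using (sum_quadraticChar_add_one_mul (p := p) 1).symm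

lemma gaussSum_eq_one_add_two_mul_sum_qres :
    gaussSum χ ψ = 1 + 2 * ∑ b : QRes p, ψ b.1 := by
  have hψ : ∑ a, ψ a = 0 := AddChar.sum_eq_zero_of_ne_one stdAddChar_ne_one
  have := sum_quadraticChar_add_one_mul (p := p) ψ
  simp only [add_mul, one_mul, Finset.sum_add_distrib, hψ, add_zero,
    AddChar.map_zero_eq_one] at this
  rw [gaussSum, this, add_comm]

lemma norm_gaussSum (hp2 : p ≠ 2) : ‖gaussSum χ ψ‖ = √p := by
  have hring : ringChar (ZMod p) ≠ 2 := by rwa [ZMod.ringChar_zmod_n]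
  have hχ1 : χ ≠ 1 := (MulChar.ringHomComp_ne_one_iff Int.cast_injective).mpr
    (quadraticChar_ne_one hring)
  have hsq := gaussSum_sq hχ1 ((quadraticChar_isQuadratic (ZMod p)).comp _)
    (ZMod.isPrimitive_stdAddChar p)
  have hneg : ‖χ (-1)‖ = 1 := by
    rw [complexQuadraticChar_apply, quadChar, if_neg (neg_ne_zero.mpr one_ne_zero)]
    split_ifs <;> simp
  have hnorm : ‖gaussSum χ ψ‖ ^ 2 = p := by
    rw [← norm_pow, hsq, norm_mul, hneg, one_mul, ZMod.card, Complex.norm_natCast]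
  rw [← hnorm, Real.sqrt_sq (norm_nonneg _)]

lemma sum_qres_mul_right {c : ZMod p} (hc : c ≠ 0) (hcs : IsSquare c) (f : ZMod p → ℂ) :
    ∑ b : QRes p, f (b.1 * c) = ∑ b : QRes p, f b.1 := by
  refine Fintype.sum_equiv ((Equiv.mulRight₀ c hc).subtypeEquiv fun b => ?_) _ _ fun b => rfl
  refine ⟨fun ⟨hb, hbs⟩ => ⟨mul_ne_zero hb hc, hbs.mul hcs⟩, fun ⟨hb, hbs⟩ => ?_⟩
  refine ⟨left_ne_zero_of_mul hb, ?_⟩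
  simpa [mul_assoc, hc] using hbs.mul hcs.inv

lemma PaleyETF_gram_apply_self (hp2 : p ≠ 2) (a : ZMod p) :
    ((PaleyETF p)ᴴ * PaleyETF p) (some a) (some a) = 1 := by
  have hp : (p : ℂ) ≠ 0 := Nat.cast_ne_zero.mpr (Fact.out : p.Prime).ne_zero
  simp only [PaleyETF_gram_apply_some, sub_self, mul_zero, AddChar.map_zero_eq_one,
    Finset.sum_const, Finset.card_univ, nsmul_eq_mul, mul_one]
  rw [add_comm, two_mul_card_qres_add_one hp2, div_self hp]

lemma PaleyETF_gram_apply_of_isSquare {a a' : ZMod p} (hne : a ≠ a') (hsq : IsSquare (a' - a)) :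
    ((PaleyETF p)ᴴ * PaleyETF p) (some a) (some a') = gaussSum χ ψ / p := by
  rw [PaleyETF_gram_apply_some, sum_qres_mul_right (sub_ne_zero.mpr hne.symm) hsq ψ,
    gaussSum_eq_one_add_two_mul_sum_qres]

lemma PaleyETF_card_sub_one_le_of_isClique (hp2 : p ≠ 2) {S : Finset (ZMod p)}
    (hS : ∀ x ∈ S, ∀ y ∈ S, x ≠ y → IsSquare (x - y)) (hne : S.Nonempty) {δ : ℝ}
    (hΦ : HasRIP (PaleyETF p) S.card δ) :
    (S.card : ℝ) - 1 ≤ δ * √p := by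
  have hp : (0 : ℝ) < p := by exact_mod_cast (Fact.out : p.Prime).pos
  have key := HasRIP.card_sub_one_mul_norm_le (S := S.map Function.Embedding.some)
    (μ := gaussSum χ ψ / p) (by rwa [Finset.card_map]) hne.map
    (by simp [PaleyETF_gram_apply_self hp2])
    (by
      simp only [Finset.mem_map, Function.Embedding.some_apply]
      rintro _ ⟨a, ha, rfl⟩ _ ⟨a', ha', rfl⟩ h
      exact PaleyETF_gram_apply_of_isSquare (by grind) (hS a' ha' a ha (by grind)))
  rw [Finset.card_map, norm_div, norm_gaussSum hp2, Complex.norm_natCast] at key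
  calc (S.card : ℝ) - 1 = ((S.card : ℝ) - 1) * (√p / p) * √p := by
        field_simp
        rw [Real.sq_sqrt hp.le]
    _ ≤ δ * √p := by gcongr

end Paley

lemma le_pow_four_of_sub_one_le_mul_sqrt_mul_log {K A : ℝ} (hK : 2 ≤ K) (hA : 0 ≤ A)
    (h : K - 1 ≤ A * √K * log K) : K ≤ (8 * A) ^ 4 := by
  obtain ⟨t, ht, rfl⟩ : ∃ t : ℝ, 0 < t ∧ t ^ 4 = K := ⟨K ^ (1 / 4 : ℝ), by positivity, by
    rw [← Real.rpow_natCast, ← Real.rpow_mul (by linarith)]; norm_num⟩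
  have hsqrt : √(t ^ 4) = t ^ 2 := by
    rw [show t ^ 4 = (t ^ 2) ^ 2 by ring, Real.sqrt_sq (by positivity)]
  have hcubic : t ^ 4 - 1 ≤ 4 * A * t ^ 3 := calc
    t ^ 4 - 1 ≤ A * t ^ 2 * (4 * log t) := by rwa [hsqrt, Real.log_pow, Nat.cast_ofNat] at h
    _ ≤ A * t ^ 2 * (4 * t) := by gcongr; exact Real.log_le_self ht.le
    _ = 4 * A * t ^ 3 := by ring
  have ht8 : t ≤ 8 * A := le_of_mul_le_mul_right (by nlinarith) (pow_pos ht 3)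
  exact pow_le_pow_left₀ ht.le ht8 4

lemma eventually_pow_four_mul_log_le_rpow (c : ℝ) {α : ℝ} (hα : 0 < α) :
    ∀ᶠ n : ℕ in atTop, (c * log n) ^ 4 ≤ (n : ℝ) ^ α := by
  have h := ((isLittleO_log_rpow_rpow_atTop 4 hα).const_mul_left (c ^ 4)).bound one_pos
  filter_upwards [tendsto_natCast_atTop_atTop.eventually h] with n hn
  rw [one_mul, Real.norm_of_nonneg (by positivity : (0 : ℝ) ≤ (n : ℝ) ^ α)] at hn
  rw [mul_pow, ← Real.rpow_natCast (log n) 4]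
  exact (le_norm_self _).trans (by exact_mod_cast hn)

/-- **The conjectured RIP constant implies subpolynomial Paley clique numbers.**
Suppose there is `C > 0` such that for every prime `p ≡ 1 (mod 4)` and every
`2 ≤ K ≤ p + 1`, the Paley ETF has the `(K, C·√(K/p)·log K·log p)`-RIP. Then for every
`α > 0` there is `p₀` such that for all primes `p ≥ p₀` with `p ≡ 1 (mod 4)`, every
clique of the Paley graph `G_p` has size at most `p^α`. A clique is a set of pairwise
adjacent vertices, adjacency being `x ≠ y` and `x − y` a nonzero square. -/
theorem paley_rip_conjecture_implies_clique_bound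
    (h : ∃ C : ℝ, 0 < C ∧ ∀ (p : ℕ) [Fact p.Prime], p % 4 = 1 →
      ∀ K : ℕ, 2 ≤ K → K ≤ p + 1 →
        HasRIP (PaleyETF p) (K : ℝ)
          (C * Real.sqrt ((K : ℝ) / (p : ℝ)) * Real.log K * Real.log p)) :
    ∀ α : ℝ, 0 < α →
      ∃ p₀ : ℕ, ∀ p : ℕ, p.Prime → p % 4 = 1 → p₀ ≤ p →
        ∀ S : Finset (ZMod p), (∀ x ∈ S, ∀ y ∈ S, x ≠ y → IsSquare (x - y)) →
          (S.card : ℝ) ≤ (p : ℝ) ^ α := by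
  obtain ⟨C, hC, hRIP⟩ := h
  intro α hα
  obtain ⟨p₀, hp₀⟩ := eventually_atTop.mp (eventually_pow_four_mul_log_le_rpow (8 * C) hα)
  refine ⟨p₀, fun p hp hp4 hle S hS => ?_⟩
  have : Fact p.Prime := ⟨hp⟩
  have hp1 : (1 : ℝ) ≤ p := by exact_mod_cast hp.one_lt.le
  rcases lt_or_ge S.card 2 with hK | hK
  · calc (S.card : ℝ) ≤ 1 := by exact_mod_cast Nat.le_of_lt_succ hK
      _ ≤ (p : ℝ) ^ α := Real.one_le_rpow hp1 hα.le
  have hcard : S.card ≤ p + 1 := by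
    have := S.card_le_univ
    rw [ZMod.card] at this
    omega
  have hclique := PaleyETF_card_sub_one_le_of_isClique (by omega) hS
    (Finset.card_pos.mp (by omega)) (hRIP p hp4 S.card hK hcard)
  have hδ : C * √((S.card : ℝ) / p) * log S.card * log p * √p =
      C * log p * √(S.card : ℝ) * log S.card := by
    rw [Real.sqrt_div (by positivity)]
    field_simp [(Real.sqrt_pos.mpr (by linarith : (0 : ℝ) < p)).ne']
  calc (S.card : ℝ) ≤ (8 * (C * log p)) ^ 4 :=
        le_pow_four_of_sub_one_le_mul_sqrt_mul_log (by exact_mod_cast hK)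
          (mul_nonneg hC.le (Real.log_nonneg hp1)) (hclique.trans_eq hδ)
    _ = (8 * C * log p) ^ 4 := by ring
    _ ≤ (p : ℝ) ^ α := hp₀ p hle
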